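/- Let t : Fin 5 → ℝ satisfy t₀ ≤ t₁ ≤ t₂ ≤ t₃ ≤ t₄ and t₄ − t₀ < 2π. Suppose some circular gap between consecutive points is at least π, i.e., either t_{i+1} − t_i ≥ π for some i ∈ {0,1,2,3}, or 2π − (t₄ − t₀) ≥ π. Then there exist pairwise distinct indices i, j, l in Fin 5 such that cos(t_i − t_j) + cos(t_j − t_l) + cos(t_i − t_l) ≥ 1. -/

import Mathlib

/-!
Cutting the circle at the gap of length at least `π` leaves the five points on an arc of length
at most `π`, so one of the two triples of consecutive points `x₀ x₁ x₂`, `x₂ x₃ x₄` of that arc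
spans at most `π / 2`. For such a triple the half-angle identity
`cos a + cos b - cos (a + b) - 1 = 4 sin (a / 2) sin (b / 2) cos ((a + b) / 2)` gives
`cos a + cos b + cos (a + b) ≥ 1 + 2 cos (a + b) ≥ 1`.
-/

open Real

theorem cos_add_cos_sub_cos_add_sub_one (a b : ℝ) :
    cos a + cos b - cos (a + b) - 1 = 4 * sin (a / 2) * sin (b / 2) * cos ((a + b) / 2) := by
  obtain ⟨x, rfl⟩ : ∃ x, a = 2 * x := ⟨a / 2, by ring⟩
  obtain ⟨y, rfl⟩ : ∃ y, b = 2 * y := ⟨b / 2, by ring⟩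
  have hx := sin_sq_add_cos_sq x
  have hy := sin_sq_add_cos_sq y
  rw [show 2 * x + 2 * y = 2 * (x + y) by ring]
  simp only [mul_div_cancel_left₀ _ (two_ne_zero' ℝ), cos_two_mul, cos_add]
  linear_combination (2 * sin y ^ 2) * hx + (2 - 2 * cos x ^ 2) * hy

theorem one_add_cos_add_le_cos_add_cos {a b : ℝ} (ha : 0 ≤ a) (hb : 0 ≤ b) (hab : a + b ≤ π) :
    1 + cos (a + b) ≤ cos a + cos b := by
  have hsa : 0 ≤ sin (a / 2) := sin_nonneg_of_nonneg_of_le_pi (by linarith) (by linarith)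
  have hsb : 0 ≤ sin (b / 2) := sin_nonneg_of_nonneg_of_le_pi (by linarith) (by linarith)
  have hc : 0 ≤ cos ((a + b) / 2) := cos_nonneg_of_mem_Icc ⟨by linarith, by linarith⟩
  have := cos_add_cos_sub_cos_add_sub_one a b
  nlinarith [mul_nonneg (mul_nonneg hsa hsb) hc]

-- Points live in `Real.Angle`, so shifting a point by `2 * π` visibly leaves the cost unchanged.
noncomputable def tripleCost (r s u : Real.Angle) : ℝ :=
  (r - s).cos + (s - u).cos + (r - u).cos

@[simp]
theorem tripleCost_coe (x y z : ℝ) :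
    tripleCost x y z = cos (x - y) + cos (y - z) + cos (x - z) := by
  simp only [tripleCost, ← Real.Angle.coe_sub, Real.Angle.cos_coe]

theorem one_le_tripleCost {x y z : ℝ} (hxy : x ≤ y) (hyz : y ≤ z) (hxz : z - x ≤ π / 2) :
    1 ≤ tripleCost x y z := by
  have key := one_add_cos_add_le_cos_add_cos (sub_nonneg.2 hxy) (sub_nonneg.2 hyz)
    (by linarith : y - x + (z - y) ≤ π)
  have hc : 0 ≤ cos (z - x) := cos_nonneg_of_mem_Icc ⟨by linarith, hxz⟩
  rw [tripleCost_coe, ← cos_neg (x - y), ← cos_neg (y - z), ← cos_neg (x - z)]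
  simp only [neg_sub, sub_add_sub_cancel'] at key ⊢
  linarith

theorem one_le_tripleCost_of_chain {x₀ x₁ x₂ x₃ x₄ : ℝ} (h₀₁ : x₀ ≤ x₁) (h₁₂ : x₁ ≤ x₂)
    (h₂₃ : x₂ ≤ x₃) (h₃₄ : x₃ ≤ x₄) (hspan : x₄ - x₀ ≤ π) :
    1 ≤ tripleCost x₀ x₁ x₂ ∨ 1 ≤ tripleCost x₂ x₃ x₄ := by
  by_cases h : x₂ - x₀ ≤ π / 2
  · exact .inl (one_le_tripleCost h₀₁ h₁₂ h)
  · exact .inr (one_le_tripleCost h₂₃ h₃₄ (by linarith))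

theorem stmt_12 (t : Fin 5 → ℝ)
    (h01 : t 0 ≤ t 1) (h12 : t 1 ≤ t 2) (h23 : t 2 ≤ t 3) (h34 : t 3 ≤ t 4)
    (hspan : t 4 - t 0 < 2 * Real.pi)
    (hgap : t 1 - t 0 ≥ Real.pi ∨ t 2 - t 1 ≥ Real.pi ∨ t 3 - t 2 ≥ Real.pi ∨
      t 4 - t 3 ≥ Real.pi ∨ 2 * Real.pi - (t 4 - t 0) ≥ Real.pi) :
    ∃ i j l : Fin 5, i ≠ j ∧ i ≠ l ∧ j ≠ l ∧
      Real.cos (t i - t j) + Real.cos (t j - t l) + Real.cos (t i - t l) ≥ 1 := by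
  have of_cost (i j l : Fin 5) (hne : i ≠ j ∧ i ≠ l ∧ j ≠ l)
      (h : 1 ≤ tripleCost (t i) (t j) (t l)) :
      ∃ i j l : Fin 5, i ≠ j ∧ i ≠ l ∧ j ≠ l ∧
        Real.cos (t i - t j) + Real.cos (t j - t l) + Real.cos (t i - t l) ≥ 1 :=
    ⟨i, j, l, hne.1, hne.2.1, hne.2.2, by rwa [tripleCost_coe] at h⟩
  have h40 : t 4 ≤ t 0 + 2 * π := by linarith
  rcases hgap with h | h | h | h | h
  · rcases one_le_tripleCost_of_chain h12 h23 h34 h40 (by linarith) with h | h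
    · exact of_cost 1 2 3 (by decide) h
    · exact of_cost 3 4 0 (by decide) (by simpa using h)
  · rcases one_le_tripleCost_of_chain h23 h34 h40 (add_le_add_left h01 _) (by linarith) with h | h
    · exact of_cost 2 3 4 (by decide) h
    · exact of_cost 4 0 1 (by decide) (by simpa using h)
  · rcases one_le_tripleCost_of_chain h34 h40 (add_le_add_left h01 _)
      (add_le_add_left h12 _) (by linarith) with h | h
    · exact of_cost 3 4 0 (by decide) (by simpa using h)
    · exact of_cost 0 1 2 (by decide) (by simpa using h)
  · rcases one_le_tripleCost_of_chain h40 (add_le_add_left h01 _)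
      (add_le_add_left h12 _) (add_le_add_left h23 _)
      (by linarith) with h | h
    · exact of_cost 4 0 1 (by decide) (by simpa using h)
    · exact of_cost 1 2 3 (by decide) (by simpa using h)
  · rcases one_le_tripleCost_of_chain h01 h12 h23 h34 (by linarith) with h | h
    · exact of_cost 0 1 2 (by decide) h
    · exact of_cost 2 3 4 (by decide) h
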